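/- arXiv:0907.0308 — 3 statements merged into one kernel-verified Lean document; each statement's English description precedes it below -/
import Mathlib

section
/- For every integer n with n ∉ {−1, 0, 1}, the Baumslag–Solitar group BS(1,n) is isomorphic to the semidirect product ℤ[1/n] ⋊ ℤ, where the generator of ℤ acts on the additive group ℤ[1/n] by multiplication by n (which is an automorphism of ℤ[1/n]); under this isomorphism the generator a corresponds to the element 1 ∈ ℤ[1/n] and the generator b corresponds to the generator of the ℤ-factor. -/
/-- `ℤ[1/n]`: the additive group of the subring of `ℚ` consisting of all rationals of the
form `z / n ^ k` with `z : ℤ` and `k : ℕ`. -/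
def zInvPow (n : ℤ) (hn : n ≠ 0) : AddSubgroup ℚ where
  carrier := {q : ℚ | ∃ z : ℤ, ∃ k : ℕ, q = z / n ^ k}
  zero_mem' := ⟨0, 0, by norm_num⟩
  add_mem' := by
    rintro a b ⟨z₁, k₁, rfl⟩ ⟨z₂, k₂, rfl⟩
    have hq : (n : ℚ) ≠ 0 := Int.cast_ne_zero.mpr hn
    refine ⟨z₁ * n ^ k₂ + z₂ * n ^ k₁, k₁ + k₂, ?_⟩
    push_cast
    rw [pow_add]
    field_simp
  neg_mem' := by
    rintro a ⟨z, k, rfl⟩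
    refine ⟨-z, k, ?_⟩
    push_cast
    rw [neg_div]

theorem one_mem_zInvPow (n : ℤ) (hn : n ≠ 0) : (1 : ℚ) ∈ zInvPow n hn :=
  ⟨1, 0, by norm_num⟩

/-- The Baumslag–Solitar relation set for `BS(1,n) = ⟨a, b ∣ b * a * b⁻¹ * a⁻ⁿ⟩`, with
`a := FreeGroup.of 0` and `b := FreeGroup.of 1`. -/
def bsRel (n : ℤ) : Set (FreeGroup (Fin 2)) :=
  {FreeGroup.of 1 * FreeGroup.of 0 * (FreeGroup.of 1)⁻¹ * (FreeGroup.of 0) ^ (-n)}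


/-! The map `a ↦ 1 ∈ ℤ[1/n]`, `b ↦ 1 ∈ ℤ` respects the relation because `1 ∈ ℤ` acts by
multiplication by `n`. Its inverse sends `z / nᵏ` to `b⁻ᵏ aᶻ bᵏ`; this is well defined and additive
because the relation gives `bᵏ aᶻ b⁻ᵏ = a^(nᵏ z)`, so representations may be brought to a common
denominator. That the composite on `ℤ[1/n] ⋊ ℤ` is the identity on `ℤ[1/n]` follows from
uniqueness: a homomorphism out of `ℤ[1/n]` is determined by the image of `1` once multiplication
by `n` is turned into conjugation by a fixed element. -/

open Multiplicative

theorem MonoidHom.map_mulAut_zpow_apply {N G : Type*} [Group N] [Group G] (f : N →* G)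
    {σ : MulAut N} {κ : MulAut G} (h : ∀ x, f (σ x) = κ (f x)) (m : ℤ) (x : N) :
    f ((σ ^ m) x) = (κ ^ m) (f x) := by
  induction m using Int.induction_on generalizing x with
  | zero => rfl
  | succ k ih => rw [zpow_add_one, zpow_add_one, MulAut.mul_apply, MulAut.mul_apply, ih, h]
  | pred k ih =>
    have h_inv : f (σ⁻¹ x) = κ⁻¹ (f x) := by
      rw [eq_comm, MulAut.inv_apply, MulEquiv.symm_apply_eq, ← h, MulAut.apply_inv_self]
    rw [zpow_sub_one, zpow_sub_one, MulAut.mul_apply, MulAut.mul_apply, ih, h_inv]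

theorem MonoidHom.comp_eq_conj_comp_of_ofAdd_one {N H : Type*} [Group N] [Group H]
    {φ : Multiplicative ℤ →* MulAut N} (f : N →* H) (t : H)
    (h : ∀ x, f (φ (ofAdd 1) x) = t * f x * t⁻¹) (g : Multiplicative ℤ) :
    f.comp (φ g).toMonoidHom = (MulAut.conj (zpowersHom H t g)).toMonoidHom.comp f := by
  ext x
  have hg : g = ofAdd 1 ^ g.toAdd := by rw [← Int.ofAdd_mul, one_mul, ofAdd_toAdd]
  rw [MonoidHom.comp_apply, MonoidHom.comp_apply, MulEquiv.coe_toMonoidHom,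
    MulEquiv.coe_toMonoidHom, hg, map_zpow, zpowersHom_apply, toAdd_zpow, toAdd_ofAdd,
    smul_eq_mul, mul_one, map_zpow]
  exact f.map_mulAut_zpow_apply h _ x

section BaumslagSolitarRelation

variable {G : Type*} [Group G] {n : ℤ} {a b : G}

theorem pow_mul_zpow_mul_inv_pow (hab : b * a * b⁻¹ = a ^ n) (k : ℕ) (z : ℤ) :
    b ^ k * a ^ z * (b ^ k)⁻¹ = a ^ (n ^ k * z) := by
  have hconj : ∀ z : ℤ, b * a ^ z * b⁻¹ = a ^ (n * z) := fun z => by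
    simpa [MulAut.conj_apply, hab, ← zpow_mul] using map_zpow (MulAut.conj b) a z
  induction k generalizing z with
  | zero => simp
  | succ k ih =>
    calc b ^ (k + 1) * a ^ z * (b ^ (k + 1))⁻¹ = b ^ k * (b * a ^ z * b⁻¹) * (b ^ k)⁻¹ := by
          group
      _ = a ^ (n ^ (k + 1) * z) := by rw [hconj, ih, pow_succ, mul_assoc]

theorem inv_pow_mul_zpow_mul_pow_add (hab : b * a * b⁻¹ = a ^ n) (k j : ℕ) (z : ℤ) :
    (b ^ k)⁻¹ * a ^ z * b ^ k = (b ^ (k + j))⁻¹ * a ^ (n ^ j * z) * b ^ (k + j) := by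
  rw [← pow_mul_zpow_mul_inv_pow hab]
  group

theorem inv_pow_mul_zpow_mul_pow_eq (hab : b * a * b⁻¹ = a ^ n) {z z' : ℤ} {k k' : ℕ}
    (h : z * n ^ k' = z' * n ^ k) :
    (b ^ k)⁻¹ * a ^ z * b ^ k = (b ^ k')⁻¹ * a ^ z' * b ^ k' := by
  rw [inv_pow_mul_zpow_mul_pow_add hab k k', inv_pow_mul_zpow_mul_pow_add hab k' k, add_comm k',
    mul_comm _ z, h, mul_comm]

end BaumslagSolitarRelation

namespace zInvPow

variable {n : ℤ} {hn : n ≠ 0}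

theorem exists_common_denominator (x y : zInvPow n hn) :
    ∃ k : ℕ, ∃ z₁ z₂ : ℤ, (x : ℚ) = z₁ / n ^ k ∧ (y : ℚ) = z₂ / n ^ k := by
  obtain ⟨z₁, k₁, hx⟩ := x.2
  obtain ⟨z₂, k₂, hy⟩ := y.2
  have hn' : (n : ℚ) ≠ 0 := Int.cast_ne_zero.mpr hn
  refine ⟨k₁ + k₂, z₁ * n ^ k₂, z₂ * n ^ k₁, ?_, ?_⟩
  · rw [hx]; push_cast; field_simp; ring
  · rw [hy]; push_cast; field_simp; ring

variable {G : Type*} [Group G] {a b : G}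

noncomputable def liftAux (hn : n ≠ 0) (a b : G) (x : zInvPow n hn) : G :=
  (b ^ x.2.choose_spec.choose)⁻¹ * a ^ x.2.choose * b ^ x.2.choose_spec.choose

theorem liftAux_eq (hab : b * a * b⁻¹ = a ^ n) {x : zInvPow n hn} {z : ℤ} {k : ℕ}
    (hx : (x : ℚ) = z / n ^ k) : liftAux hn a b x = (b ^ k)⁻¹ * a ^ z * b ^ k := by
  have hn' : (n : ℚ) ≠ 0 := Int.cast_ne_zero.mpr hn
  have hx₀ : (x : ℚ) = x.2.choose / n ^ x.2.choose_spec.choose := x.2.choose_spec.choose_spec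
  refine inv_pow_mul_zpow_mul_pow_eq hab ?_
  rw [hx₀, div_eq_div_iff (pow_ne_zero _ hn') (pow_ne_zero _ hn')] at hx
  exact_mod_cast hx

noncomputable def lift (hn : n ≠ 0) (hab : b * a * b⁻¹ = a ^ n) :
    Multiplicative (zInvPow n hn) →* G :=
  MonoidHom.mk' (fun x => liftAux hn a b x.toAdd) fun x y => by
    obtain ⟨k, z₁, z₂, hx, hy⟩ := exists_common_denominator x.toAdd y.toAdd
    have hxy : ((x.toAdd + y.toAdd : zInvPow n hn) : ℚ) = ((z₁ + z₂ : ℤ) : ℚ) / n ^ k := by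
      rw [AddSubgroup.coe_add, hx, hy]; push_cast; ring
    rw [toAdd_mul, liftAux_eq hab hxy, liftAux_eq hab hx, liftAux_eq hab hy, zpow_add]
    group

theorem lift_apply (hab : b * a * b⁻¹ = a ^ n) {x : zInvPow n hn} {z : ℤ} {k : ℕ}
    (hx : (x : ℚ) = z / n ^ k) : lift hn hab (ofAdd x) = (b ^ k)⁻¹ * a ^ z * b ^ k :=
  liftAux_eq hab hx

theorem lift_ofAdd_one (hab : b * a * b⁻¹ = a ^ n) :
    lift hn hab (ofAdd ⟨1, one_mem_zInvPow n hn⟩) = a := by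
  rw [lift_apply hab (z := 1) (k := 0) (by simp)]
  simp

theorem lift_ofAdd_of_coe_eq_mul (hab : b * a * b⁻¹ = a ^ n) {x y : zInvPow n hn}
    (hxy : (y : ℚ) = n * x) : lift hn hab (ofAdd y) = b * lift hn hab (ofAdd x) * b⁻¹ := by
  obtain ⟨z, k, hx⟩ := x.2
  have hy : (y : ℚ) = ((n * z : ℤ) : ℚ) / n ^ k := by rw [hxy, hx]; push_cast; ring
  have hconj : b * a ^ z * b⁻¹ = a ^ (n * z) := by
    simpa using pow_mul_zpow_mul_inv_pow hab 1 z
  rw [lift_apply hab hx, lift_apply hab hy, ← hconj]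
  group

theorem eq_lift (hab : b * a * b⁻¹ = a ^ n) (f : Multiplicative (zInvPow n hn) →* G)
    (h_one : f (ofAdd ⟨1, one_mem_zInvPow n hn⟩) = a)
    (h_conj : ∀ x y : zInvPow n hn, (y : ℚ) = n * x → f (ofAdd y) = b * f (ofAdd x) * b⁻¹) :
    f = lift hn hab := by
  have h_pow (k : ℕ) (x : zInvPow n hn) :
      f (ofAdd ((n ^ k) • x)) = b ^ k * f (ofAdd x) * (b ^ k)⁻¹ := by
    induction k with
    | zero => simp
    | succ k ih =>
      rw [h_conj ((n ^ k) • x) ((n ^ (k + 1)) • x) (by push_cast; ring), ih]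
      group
  suffices ∀ x : zInvPow n hn, f (ofAdd x) = lift hn hab (ofAdd x) from
    MonoidHom.ext fun x => this x.toAdd
  intro x
  obtain ⟨z, k, hx⟩ := x.2
  have hn' : (n : ℚ) ≠ 0 := Int.cast_ne_zero.mpr hn
  have hz : (n ^ k) • x = z • ⟨1, one_mem_zInvPow n hn⟩ :=
    Subtype.ext (by simp only [AddSubgroupClass.coe_zsmul, zsmul_eq_mul, hx]; push_cast; field_simp)
  calc f (ofAdd x) = (b ^ k)⁻¹ * (b ^ k * f (ofAdd x) * (b ^ k)⁻¹) * b ^ k := by group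
    _ = (b ^ k)⁻¹ * a ^ z * b ^ k := by rw [← h_pow, hz, ofAdd_zsmul, map_zpow, h_one]
    _ = lift hn hab (ofAdd x) := (lift_apply hab hx).symm

end zInvPow

theorem of_one_mul_of_zero_mul_inv_of_one (n : ℤ) :
    (PresentedGroup.of 1 * PresentedGroup.of 0 * (PresentedGroup.of 1)⁻¹ :
      PresentedGroup (bsRel n)) = PresentedGroup.of 0 ^ n := by
  have h := PresentedGroup.one_of_mem (rels := bsRel n) (Set.mem_singleton _)
  rwa [map_mul, map_zpow, zpow_neg, mul_inv_eq_one] at h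

open SemidirectProduct

section ZInvPowSemidirectProduct

variable {n : ℤ} {hn : n ≠ 0} {φ : Multiplicative ℤ →* MulAut (Multiplicative (zInvPow n hn))}

theorem inl_ofAdd_eq_inr_mul_inl_mul_inv
    (hφ : ∀ x : zInvPow n hn, ((toAdd (φ (ofAdd 1) (ofAdd x)) : zInvPow n hn) : ℚ) = n * x)
    {x y : zInvPow n hn} (hxy : (y : ℚ) = n * x) :
    (inl (ofAdd y) : _ ⋊[φ] _) = inr (ofAdd 1) * inl (ofAdd x) * (inr (ofAdd 1))⁻¹ := by
  rw [← map_inv, ← inl_aut]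
  exact congrArg inl (toAdd.injective (Subtype.ext ((hφ x).trans hxy.symm))).symm

theorem inr_mul_inl_mul_inv_eq_inl_zpow
    (hφ : ∀ x : zInvPow n hn, ((toAdd (φ (ofAdd 1) (ofAdd x)) : zInvPow n hn) : ℚ) = n * x) :
    inr (ofAdd 1) * inl (ofAdd ⟨1, one_mem_zInvPow n hn⟩) * (inr (ofAdd 1))⁻¹ =
      (inl (ofAdd ⟨1, one_mem_zInvPow n hn⟩) : _ ⋊[φ] _) ^ n := by
  rw [← inl_ofAdd_eq_inr_mul_inl_mul_inv hφ (y := n • ⟨1, one_mem_zInvPow n hn⟩) (by simp),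
    ofAdd_zsmul, map_zpow]

end ZInvPowSemidirectProduct

/-- For every integer `n ∉ {-1, 0, 1}`, the Baumslag–Solitar group `BS(1,n)` is isomorphic to
the semidirect product `ℤ[1/n] ⋊ ℤ`, where the generator of `ℤ` acts on the additive group
`ℤ[1/n]` by multiplication by `n`; under this isomorphism the generator `a` corresponds to
`1 ∈ ℤ[1/n]` and the generator `b` corresponds to the generator of the `ℤ`-factor. -/
theorem baumslagSolitar_iso_semidirectProduct (n : ℤ)
    (hn : n ≠ -1 ∧ n ≠ 0 ∧ n ≠ 1)
    (φ : Multiplicative ℤ →* MulAut (Multiplicative (zInvPow n hn.2.1)))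
    (hφ : ∀ x : zInvPow n hn.2.1,
      ((Multiplicative.toAdd (φ (Multiplicative.ofAdd (1 : ℤ))
        (Multiplicative.ofAdd x)) : zInvPow n hn.2.1) : ℚ) = (n : ℚ) * (x : ℚ)) :
    ∃ e : PresentedGroup (bsRel n) ≃*
        SemidirectProduct (Multiplicative (zInvPow n hn.2.1)) (Multiplicative ℤ) φ,
      e (PresentedGroup.of 0) =
        SemidirectProduct.inl (Multiplicative.ofAdd ⟨1, one_mem_zInvPow n hn.2.1⟩) ∧
      e (PresentedGroup.of 1) =
        SemidirectProduct.inr (Multiplicative.ofAdd (1 : ℤ)) := by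
  set u : Multiplicative (zInvPow n hn.2.1) := ofAdd ⟨1, one_mem_zInvPow n hn.2.1⟩
  set t : Multiplicative ℤ := ofAdd 1
  have hut := inr_mul_inl_mul_inv_eq_inl_zpow hφ
  have hrel : ∀ r ∈ bsRel n, FreeGroup.lift (![inl u, inr t] : Fin 2 → _ ⋊[φ] _) r = 1 := by
    rintro r rfl
    simp [u, t, hut]
  have hba := of_one_mul_of_zero_mul_inv_of_one n
  let θ := PresentedGroup.toGroup hrel
  let ψ := SemidirectProduct.lift (zInvPow.lift hn.2.1 hba) (zpowersHom _ (PresentedGroup.of 1))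
    (MonoidHom.comp_eq_conj_comp_of_ofAdd_one _ _ fun x =>
      zInvPow.lift_ofAdd_of_coe_eq_mul hba (hφ x.toAdd))
  have hθ_of_one : θ (PresentedGroup.of 1) = inr t := PresentedGroup.toGroup.of hrel
  have hψθ : ψ.comp θ = MonoidHom.id _ := by
    refine PresentedGroup.ext fun i => ?_
    fin_cases i <;> simp [θ, ψ, u, t, zInvPow.lift_ofAdd_one]
  have hθψ : θ.comp ψ = MonoidHom.id _ := by
    refine hom_ext ?_ (MonoidHom.ext_mint ?_)
    · rw [zInvPow.eq_lift hut ((MonoidHom.id _).comp inl) rfl fun _ _ =>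
        inl_ofAdd_eq_inr_mul_inl_mul_inv hφ]
      refine zInvPow.eq_lift hut _ (by simp [θ, ψ, u, zInvPow.lift_ofAdd_one]) fun x y hxy => ?_
      simp only [MonoidHom.comp_apply, ψ, lift_inl]
      rw [zInvPow.lift_ofAdd_of_coe_eq_mul hba hxy, map_mul, map_mul, map_inv, hθ_of_one]
    · simpa [ψ, t] using hθ_of_one
  exact ⟨θ.toMulEquiv ψ hψθ hθψ, PresentedGroup.toGroup.of hrel, hθ_of_one⟩
end

section
/- For every integer n with |n| ≥ 2, the Baumslag–Solitar group BS(1,n) is not polycyclic; indeed, the kernel of the homomorphism BS(1,n) → ℤ sending a ↦ 0 and b ↦ 1 is a subgroup of BS(1,n) that is not finitely generated, whereas every subgroup of a polycyclic group is finitely generated. -/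
/-- A group `G` is polycyclic if there is a finite chain of subgroups
`1 = H₀ ≤ H₁ ≤ ⋯ ≤ Hₘ = G` with each `Hᵢ` normal in `Hᵢ₊₁` and each quotient `Hᵢ₊₁/Hᵢ`
cyclic. -/
def IsPolycyclic (G : Type*) [Group G] : Prop :=
  ∃ (m : ℕ) (H : Fin (m + 1) → Subgroup G),
    H 0 = ⊥ ∧ H (Fin.last m) = ⊤ ∧
    ∀ i : Fin m, H i.castSucc ≤ H i.succ ∧
      ∃ hnorm : ((H i.castSucc).subgroupOf (H i.succ)).Normal,
        haveI := hnorm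
        IsCyclic ((H i.succ) ⧸ (H i.castSucc).subgroupOf (H i.succ))

/-!
Every subgroup of a polycyclic group is finitely generated: a subgroup `K ≤ Hᵢ₊₁` is an extension
of a subgroup of the cyclic group `Hᵢ₊₁ ⧸ Hᵢ` by `K ⊓ Hᵢ`.

Sending `a ↦ (1, 0)` and `b ↦ (0, 1)` defines a homomorphism from `BS(1,n)` to `ℚ ⋊ ℤ`, where `ℤ`
acts on `ℚ` through multiplication by powers of `n`. It maps the kernel of `a ↦ 0, b ↦ 1` into
`ℚ`, and the image contains `n⁻ᵏ`, the image of `b⁻ᵏ a bᵏ`, for every `k`. A finitely generated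
subgroup of `ℚ` lies in `(1/d) ℤ` for some `d ≠ 0`, which would force `nᵏ ∣ d` for all `k`.
-/

open Subgroup

theorem Group.fg_of_isCyclic (G : Type*) [Group G] [IsCyclic G] : Group.FG G := by
  obtain ⟨g, hg⟩ := IsCyclic.exists_generator (α := G)
  refine Group.fg_iff.2 ⟨{g}, ?_, Set.finite_singleton g⟩
  rw [← zpowers_eq_closure, eq_top_iff]
  exact fun x _ => hg x

theorem Group.fg_of_surjective_of_fg_ker {G Q : Type*} [Group G] [Group Q] [Group.FG Q]
    {f : G →* Q} (hf : Function.Surjective f) (hker : f.ker.FG) : Group.FG G := by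
  classical
  obtain ⟨T, hT⟩ := Group.fg_def.1 ‹Group.FG Q›
  let L := closure ((T.image (Function.surjInv hf) : Finset G) : Set G)
  have hL : L.map f = ⊤ := by
    rw [MonoidHom.map_closure, Finset.coe_image, Set.image_image]
    simpa [Function.surjInv_eq hf] using hT
  have hsup : L ⊔ f.ker = ⊤ := top_unique (map_le_map_iff.1 (hL ▸ le_top))
  exact Group.fg_def.2 (hsup ▸ FG.sup ⟨_, rfl⟩ hker)

theorem Subgroup.fg_subgroupOf {G : Type*} [Group G] {H K : Subgroup G} (hH : (H ⊓ K).FG) :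
    (H.subgroupOf K).FG := by
  rw [← inf_subgroupOf_right, ← Group.fg_iff_subgroup_fg]
  rw [← Group.fg_iff_subgroup_fg] at hH
  let e := (subgroupOfEquivOfLe (inf_le_right : H ⊓ K ≤ K)).symm
  exact Group.fg_of_surjective (f := e.toMonoidHom) e.surjective

theorem Subgroup.fg_of_le_of_isCyclic_quotient {G : Type*} [Group G] {N M K : Subgroup G}
    [(N.subgroupOf M).Normal] [IsCyclic (M ⧸ N.subgroupOf M)] (hN : ∀ K ≤ N, K.FG)
    (hK : K ≤ M) : K.FG := by
  let f : K →* M ⧸ N.subgroupOf M := (QuotientGroup.mk' _).comp (inclusion hK)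
  have hker : f.ker = N.subgroupOf K := by
    ext x
    simp [f, mem_subgroupOf]
  have : Group.FG f.range := Group.fg_of_isCyclic _
  rw [← Group.fg_iff_subgroup_fg]
  refine Group.fg_of_surjective_of_fg_ker f.rangeRestrict_surjective ?_
  rw [MonoidHom.ker_rangeRestrict, hker]
  exact fg_subgroupOf (hN _ inf_le_left)

theorem IsPolycyclic.fg_subgroup {G : Type*} [Group G] (hG : IsPolycyclic G) (K : Subgroup G) :
    K.FG := by
  obtain ⟨m, H, h0, hlast, hstep⟩ := hG
  suffices ∀ i, ∀ K ≤ H i, K.FG from this _ K (hlast ▸ le_top)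
  intro i
  induction i using Fin.induction with
  | zero =>
    intro K hK
    rw [h0, le_bot_iff] at hK
    exact hK ▸ FG.bot
  | succ i ih =>
    obtain ⟨-, _, _⟩ := hstep i
    exact fun K hK => fg_of_le_of_isCyclic_quotient ih hK

theorem Rat.mem_zmultiples_inv_of_den_dvd {q : ℚ} {d : ℕ} (hd : d ≠ 0) (h : q.den ∣ d) :
    q ∈ AddSubgroup.zmultiples ((d : ℚ)⁻¹) := by
  obtain ⟨c, rfl⟩ := h
  have hc : (c : ℚ) ≠ 0 := by exact_mod_cast right_ne_zero_of_mul hd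
  refine ⟨q.num * c, ?_⟩
  simp only [zsmul_eq_mul]
  push_cast
  rw [mul_inv, mul_mul_mul_comm, mul_inv_cancel₀ hc, mul_one, ← div_eq_mul_inv, Rat.num_div_den]

theorem AddSubgroup.FG.exists_le_zmultiples_inv {H : AddSubgroup ℚ} (hH : H.FG) :
    ∃ d : ℕ, d ≠ 0 ∧ H ≤ AddSubgroup.zmultiples ((d : ℚ)⁻¹) := by
  obtain ⟨S, rfl⟩ := hH
  have hd : ∏ q ∈ S, q.den ≠ 0 := Finset.prod_ne_zero_iff.2 fun q _ => q.den_ne_zero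
  refine ⟨_, hd, ?_⟩
  rw [AddSubgroup.closure_le]
  exact fun q hq => Rat.mem_zmultiples_inv_of_den_dvd hd (Finset.dvd_prod_of_mem _ hq)

theorem Int.pow_dvd_of_inv_pow_mem_zmultiples {n : ℤ} {d k : ℕ} (hn : n ≠ 0) (hd : d ≠ 0)
    (h : ((n : ℚ) ^ k)⁻¹ ∈ AddSubgroup.zmultiples ((d : ℚ)⁻¹)) : n ^ k ∣ d := by
  obtain ⟨m, hm⟩ := AddSubgroup.mem_zmultiples_iff.1 h
  rw [zsmul_eq_mul] at hm
  field_simp at hm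
  exact ⟨m, by rw [mul_comm]; exact_mod_cast hm.symm⟩

theorem Int.exists_not_pow_dvd {n d : ℤ} (hn : 2 ≤ |n|) (hd : d ≠ 0) : ∃ k : ℕ, ¬ n ^ k ∣ d := by
  have hn1 : n.natAbs ≠ 1 := by rw [Int.abs_eq_natAbs] at hn; omega
  obtain ⟨k, hk⟩ := Int.finiteMultiplicity_iff.2 ⟨hn1, hd⟩
  exact ⟨k + 1, hk⟩

theorem AddSubgroup.not_fg_of_forall_inv_pow_mem {n : ℤ} (hn : 2 ≤ |n|) {H : AddSubgroup ℚ}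
    (h : ∀ k : ℕ, ((n : ℚ) ^ k)⁻¹ ∈ H) : ¬ H.FG := by
  intro hH
  obtain ⟨d, hd, hle⟩ := hH.exists_le_zmultiples_inv
  obtain ⟨k, hk⟩ := Int.exists_not_pow_dvd hn (d := d) (by exact_mod_cast hd)
  exact hk (Int.pow_dvd_of_inv_pow_mem_zmultiples (by rintro rfl; simp at hn) hd (hle (h k)))

open Multiplicative SemidirectProduct

def SemidirectProduct.leftHom {N G : Type*} [Group N] [Group G] {φ : G →* MulAut N} :
    (rightHom : N ⋊[φ] G →* G).ker →* N where
  toFun x := x.1.left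
  map_one' := rfl
  map_mul' x y := by
    rw [Subgroup.coe_mul, mul_left, show x.1.right = 1 from x.2, map_one, MulAut.one_apply]

namespace BaumslagSolitar

def zpowAct (u : ℚˣ) : Multiplicative ℤ →* MulAut (Multiplicative ℚ) :=
  (MulAutMultiplicative ℚ).symm.toMonoidHom.comp
    ((DistribMulAction.toAddAut ℚˣ ℚ).comp (zpowersHom ℚˣ u))

@[simp] theorem zpowAct_apply (u : ℚˣ) (k : ℤ) (q : ℚ) :
    zpowAct u (ofAdd k) (ofAdd q) = ofAdd (((u ^ k : ℚˣ) : ℚ) * q) := rfl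

abbrev Model (u : ℚˣ) := Multiplicative ℚ ⋊[zpowAct u] Multiplicative ℤ

theorem lift_bsRel_eq_one {n : ℤ} {u : ℚˣ} (hu : (u : ℚ) = n) :
    ∀ r ∈ bsRel n, FreeGroup.lift ![(inl (ofAdd 1) : Model u), inr (ofAdd 1)] r = 1 := by
  rintro _ rfl
  simp only [map_mul, map_inv, map_zpow, FreeGroup.lift_apply_of, Matrix.cons_val_zero,
    Matrix.cons_val_one]
  rw [← map_inv, ← inl_aut, ← map_zpow, ← map_mul, zpowAct_apply, ← ofAdd_zsmul, ← ofAdd_add]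
  simp [hu]

noncomputable def toModel {n : ℤ} {u : ℚˣ} (hu : (u : ℚ) = n) :
    PresentedGroup (bsRel n) →* Model u :=
  PresentedGroup.toGroup (lift_bsRel_eq_one hu)

variable {n : ℤ} {u : ℚˣ} (hu : (u : ℚ) = n)

@[simp] theorem toModel_of_zero : toModel hu (PresentedGroup.of 0) = inl (ofAdd 1) :=
  PresentedGroup.toGroup.of _

@[simp] theorem toModel_of_one : toModel hu (PresentedGroup.of 1) = inr (ofAdd 1) :=
  PresentedGroup.toGroup.of _

theorem toModel_conj (k : ℕ) :
    toModel hu ((PresentedGroup.of 1 ^ k)⁻¹ * PresentedGroup.of 0 * PresentedGroup.of 1 ^ k) =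
      inl (ofAdd ((n : ℚ) ^ k)⁻¹) := by
  rw [map_mul, map_mul, map_inv, map_pow, toModel_of_zero, toModel_of_one, ← map_pow, ← map_inv,
    ← inl_aut_inv, ← map_inv, ← ofAdd_nsmul, ← ofAdd_neg, zpowAct_apply]
  simp [hu]

theorem ker_not_fg (hn : 2 ≤ |n|) : ¬ (rightHom.comp (toModel hu)).ker.FG := by
  intro hK
  rw [← Group.fg_iff_subgroup_fg, ← MonoidHom.comap_ker] at hK
  let κ := MonoidHom.toAdditiveLeft (leftHom.comp ((toModel hu).subgroupComap rightHom.ker))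
  refine AddSubgroup.not_fg_of_forall_inv_pow_mem hn (H := κ.range) (fun k => ?_)
    ((AddGroup.fg_iff_addSubgroup_fg _).1 inferInstance)
  obtain ⟨g, hg⟩ : ∃ g, toModel hu g = inl (ofAdd ((n : ℚ) ^ k)⁻¹) := ⟨_, toModel_conj hu k⟩
  have hmem : g ∈ rightHom.ker.comap (toModel hu) := by
    rw [Subgroup.mem_comap, hg, MonoidHom.mem_ker, rightHom_inl]
  exact ⟨Additive.ofMul ⟨g, hmem⟩, show (toModel hu g).left.toAdd = _ by rw [hg]; rfl⟩

end BaumslagSolitar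

/-- For every integer `n` with `|n| ≥ 2`, the Baumslag–Solitar group `BS(1,n)` is not
polycyclic; indeed, the kernel of the homomorphism `BS(1,n) → ℤ` sending `a ↦ 0` and `b ↦ 1`
is a subgroup of `BS(1,n)` that is not finitely generated, whereas every subgroup of a
polycyclic group is finitely generated. -/
theorem baumslagSolitar_not_polycyclic (n : ℤ) (hn : 2 ≤ |n|) :
    ¬ IsPolycyclic (PresentedGroup (bsRel n)) ∧
    (∃ φ : PresentedGroup (bsRel n) →* Multiplicative ℤ,
      φ (PresentedGroup.of 0) = Multiplicative.ofAdd (0 : ℤ) ∧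
      φ (PresentedGroup.of 1) = Multiplicative.ofAdd (1 : ℤ) ∧
      ¬ φ.ker.FG) ∧
    (∀ (G : Type) [Group G], IsPolycyclic G → ∀ H : Subgroup G, H.FG) := by
  have hn0 : (n : ℚ) ≠ 0 := Int.cast_ne_zero.2 (by rintro rfl; simp at hn)
  have hu : ((Units.mk0 (n : ℚ) hn0 : ℚˣ) : ℚ) = n := rfl
  have hker := BaumslagSolitar.ker_not_fg hu hn
  refine ⟨fun h => hker (h.fg_subgroup _), ⟨_, ?_, ?_, hker⟩, fun G _ h => h.fg_subgroup⟩ <;> simp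
end

section
/- Let α be the automorphism of ℤ² given by the matrix ((2,1),(1,1)), and let G = ℤ² ⋊_α ℤ be the corresponding semidirect product. Then G is polycyclic, and G has exponential growth: there exist a finite generating set S of G with 1 ∈ S and S = S⁻¹, and a real number c > 1, such that for every k ∈ ℕ the product set Sᵏ = {s₁s₂⋯sₖ : sᵢ ∈ S} has cardinality at least cᵏ. -/
open Pointwise

/-!
Any semidirect product `ℤ² ⋊ ℤ` is polycyclic through the chain `1 ≤ ⟨a⟩ ≤ ℤ² ≤ G`, where
`a = (1, 0)`. For the growth, let `t` generate `ℤ`. A word `w₀ ⋯ wₙ₋₁` with `wᵢ = a t` or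
`wᵢ = t` equals `(∑ εᵢ αⁱ a, n)`, where `εᵢ` records the choice of `wᵢ`. The first coordinates
of `αⁱ (1, 0)` are superincreasing: each exceeds the sum of the earlier ones, which is the second
coordinate. Hence the `2ⁿ` words are pairwise distinct, and `|Sⁿ| ≥ 2ⁿ` for every `S`
containing `a t` and `t`.
-/

open Finset

section Superincreasing

variable {M : Type*} [AddCommMonoid M] [LinearOrder M] [IsOrderedCancelAddMonoid M]
  {x : ℕ → M}

lemma pos_of_sum_range_lt (hx : ∀ n, ∑ i ∈ range n, x i < x n) (n : ℕ) : 0 < x n := by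
  induction n using Nat.strong_induction_on with
  | _ n ih => exact (sum_nonneg fun i hi => (ih i (mem_range.1 hi)).le).trans_lt (hx n)

lemma sum_ite_nonneg (hx : ∀ n, 0 ≤ x n) {n : ℕ} (ε : Fin n → Bool) :
    0 ≤ ∑ i : Fin n, if ε i then x i else 0 :=
  sum_nonneg fun i _ => by split <;> simp [hx]

lemma sum_ite_le_sum_range (hx : ∀ n, 0 ≤ x n) {n : ℕ} (ε : Fin n → Bool) :
    ∑ i : Fin n, (if ε i then x i else 0) ≤ ∑ i ∈ range n, x i := by
  rw [sum_range]
  exact sum_le_sum fun i _ => by split <;> simp [hx]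

lemma sum_ite_lt_sum_ite_of_last (hx : ∀ n, ∑ i ∈ range n, x i < x n) {n : ℕ}
    {ε δ : Fin (n + 1) → Bool} (hε : ε (Fin.last n) = false) (hδ : δ (Fin.last n) = true) :
    ∑ i, (if ε i then x i else 0) < ∑ i, if δ i then x i else 0 := by
  have hx0 n : 0 ≤ x n := (pos_of_sum_range_lt hx n).le
  simp only [Fin.sum_univ_castSucc, hε, hδ, Fin.val_last, Fin.val_castSucc]
  calc _ ≤ ∑ i ∈ range n, x i := by simpa using sum_ite_le_sum_range hx0 (ε ∘ Fin.castSucc)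
    _ < x n := hx n
    _ ≤ _ := le_add_of_nonneg_left (by simpa using sum_ite_nonneg hx0 (δ ∘ Fin.castSucc))

lemma sum_ite_injective_of_sum_range_lt (hx : ∀ n, ∑ i ∈ range n, x i < x n) (n : ℕ) :
    Function.Injective fun ε : Fin n → Bool => ∑ i, if ε i then x i else 0 := by
  induction n with
  | zero => exact fun _ _ _ => Subsingleton.elim _ _
  | succ n ih =>
    intro ε δ h
    have hlast : ε (Fin.last n) = δ (Fin.last n) := by
      cases hε : ε (Fin.last n) <;> cases hδ : δ (Fin.last n)
      · rfl
      · exact absurd h (sum_ite_lt_sum_ite_of_last hx hε hδ).ne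
      · exact absurd h (sum_ite_lt_sum_ite_of_last hx hδ hε).ne'
      · rfl
    have hinit : ε ∘ Fin.castSucc = δ ∘ Fin.castSucc := by
      refine ih (add_right_cancel (b := if ε (Fin.last n) then x n else 0) ?_)
      simpa only [Fin.sum_univ_castSucc, hlast, Function.comp_apply, Fin.val_castSucc,
        Fin.val_last] using h
    funext i
    cases i using Fin.lastCases with
    | last => exact hlast
    | cast j => exact congrFun hinit j

end Superincreasing

section TwoLetterWords

variable {M : Type*} [Monoid M]

def twoLetterWord (u v : M) {n : ℕ} (ε : Fin n → Bool) : M :=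
  (List.ofFn fun i => if ε i then u else v).prod

theorem Set.Finite.pow {S : Set M} (hS : S.Finite) (n : ℕ) : (S ^ n).Finite := by
  induction n with
  | zero => simp
  | succ n ih => rw [pow_succ]; exact ih.mul hS

lemma twoLetterWord_mem_pow {S : Set M} {u v : M} (hu : u ∈ S) (hv : v ∈ S) {n : ℕ}
    (ε : Fin n → Bool) : twoLetterWord u v ε ∈ S ^ n :=
  Set.mem_pow.2 ⟨fun i => ⟨if ε i then u else v, by split <;> assumption⟩, rfl⟩

lemma two_pow_le_ncard_pow {S : Set M} (hS : S.Finite) {u v : M} (hu : u ∈ S) (hv : v ∈ S)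
    {n : ℕ} (hinj : Function.Injective (twoLetterWord u v : (Fin n → Bool) → M)) :
    2 ^ n ≤ (S ^ n).ncard :=
  calc 2 ^ n = Nat.card (Fin n → Bool) := by simp
    _ = (Set.range (twoLetterWord u v)).ncard := (Nat.card_range_of_injective hinj).symm
    _ ≤ (S ^ n).ncard :=
      Set.ncard_le_ncard (Set.range_subset_iff.2 (twoLetterWord_mem_pow hu hv)) (hS.pow n)

end TwoLetterWords

namespace Subgroup

variable {G : Type*} [Group G] {H K : Subgroup G}

lemma isCyclic_quotient_subgroupOf [(H.subgroupOf K).Normal] {g : G} (hg : g ∈ K)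
    (hgen : ∀ k ∈ K, ∃ n : ℤ, (g ^ n)⁻¹ * k ∈ H) :
    IsCyclic (K ⧸ H.subgroupOf K) := by
  refine ⟨⟨QuotientGroup.mk ⟨g, hg⟩, fun x => ?_⟩⟩
  induction x using QuotientGroup.induction_on with
  | H k =>
    obtain ⟨n, hn⟩ := hgen k k.2
    refine ⟨n, ?_⟩
    beta_reduce
    rw [← QuotientGroup.mk_zpow, QuotientGroup.eq, mem_subgroupOf]
    simpa using hn

lemma le_and_isCyclic_quotient_subgroupOf (hHK : H ≤ K) [(H.subgroupOf K).Normal] {g : G}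
    (hg : g ∈ K) (hgen : ∀ k ∈ K, ∃ n : ℤ, (g ^ n)⁻¹ * k ∈ H) :
    H ≤ K ∧ ∃ hnorm : (H.subgroupOf K).Normal,
      haveI := hnorm
      IsCyclic (K ⧸ H.subgroupOf K) :=
  ⟨hHK, inferInstance, isCyclic_quotient_subgroupOf hg hgen⟩

end Subgroup

lemma SemidirectProduct.list_prod_ofFn_inl_mul_inr {N H : Type*} [Group N] [Group H]
    {φ : H →* MulAut N} {n : ℕ} (f : Fin n → N) (h : H) :
    (List.ofFn fun i => (inl (f i) * inr h : N ⋊[φ] H)).prod =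
      inl (List.ofFn fun i => φ (h ^ (i : ℕ)) (f i)).prod * inr (h ^ n) := by
  induction n with
  | zero => simp
  | succ n ih =>
    simp only [List.ofFn_succ', List.prod_concat, ih, Fin.val_castSucc, Fin.val_last]
    rw [pow_succ]
    ext <;> simp [mul_assoc, -map_pow]

lemma MulAut.pow_ofAdd_eq_ofAdd_iterate {A : Type*} [AddGroup A] (σ : MulAut (Multiplicative A))
    {f : A → A} (hσ : ∀ v, σ (.ofAdd v) = .ofAdd (f v)) (n : ℕ) (v : A) :
    (σ ^ n) (.ofAdd v) = .ofAdd (f^[n] v) := by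
  induction n with
  | zero => rfl
  | succ n ih => rw [pow_succ', MulAut.mul_apply, ih, hσ, Function.iterate_succ_apply']

def catMap (v : ℤ × ℤ) : ℤ × ℤ := (2 * v.1 + v.2, v.1 + v.2)

lemma mapsTo_catMap :
    Set.MapsTo catMap {v | 0 ≤ v.2 ∧ v.2 < v.1} {v | 0 ≤ v.2 ∧ v.2 < v.1} :=
  fun v ⟨h₀, h₁⟩ => by constructor <;> simp only [catMap] <;> omega

lemma snd_iterate_catMap (v : ℤ × ℤ) (n : ℕ) :
    (catMap^[n] v).2 = v.2 + ∑ i ∈ range n, (catMap^[i] v).1 := by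
  induction n with
  | zero => simp
  | succ n ih =>
    rw [Function.iterate_succ_apply', sum_range_succ, ← add_assoc, ← ih]
    exact add_comm _ _

lemma sum_range_fst_iterate_catMap_lt (n : ℕ) :
    ∑ i ∈ range n, (catMap^[i] (1, 0)).1 < (catMap^[n] (1, 0)).1 := by
  have := mapsTo_catMap.iterate n (show ((1 : ℤ), (0 : ℤ)) ∈ _ by simp)
  simpa [snd_iterate_catMap] using this.2

namespace IntSqSemidirect

open SemidirectProduct Multiplicative

variable (φ : Multiplicative ℤ →* MulAut (Multiplicative (ℤ × ℤ)))

local notation "G" => Multiplicative (ℤ × ℤ) ⋊[φ] Multiplicative ℤ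

def a : G := inl (ofAdd (1, 0))

def b : G := inl (ofAdd (0, 1))

def t : G := inr (ofAdd 1)

variable {φ}

lemma inl_eq_b_zpow_mul_a_zpow (v : Multiplicative (ℤ × ℤ)) :
    (inl v : G) = b φ ^ (toAdd v).2 * a φ ^ (toAdd v).1 := by
  simp only [a, b, ← map_zpow, ← map_mul, ← ofAdd_zsmul, ← ofAdd_add]
  congr 1
  ext <;> simp

lemma inr_eq_t_zpow (m : Multiplicative ℤ) : (inr m : G) = t φ ^ toAdd m := by
  simp [t, ← map_zpow, ← ofAdd_zsmul]

lemma closure_a_b_t_eq_top : Subgroup.closure {a φ, b φ, t φ} = ⊤ := by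
  refine eq_top_iff.2 fun g _ => ?_
  have mem {x : G} (hx : x ∈ ({a φ, b φ, t φ} : Set G)) :
      x ∈ Subgroup.closure {a φ, b φ, t φ} :=
    Subgroup.subset_closure hx
  rw [← inl_left_mul_inr_right g, inl_eq_b_zpow_mul_a_zpow, inr_eq_t_zpow]
  exact mul_mem (mul_mem (zpow_mem (mem (by simp)) _) (zpow_mem (mem (by simp)) _))
    (zpow_mem (mem (by simp)) _)

variable (φ) in
theorem isPolycyclic : IsPolycyclic G := by
  refine ⟨3, ![⊥, Subgroup.zpowers (a φ), (inl : _ →* G).range, ⊤], rfl, rfl, ?_⟩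
  intro i
  fin_cases i
  · refine Subgroup.le_and_isCyclic_quotient_subgroupOf (H := ⊥) (K := Subgroup.zpowers (a φ))
      bot_le (Subgroup.mem_zpowers _) fun k hk => ?_
    obtain ⟨n, rfl⟩ := Subgroup.mem_zpowers_iff.1 hk
    exact ⟨n, by simp⟩
  · refine Subgroup.le_and_isCyclic_quotient_subgroupOf (K := (inl : _ →* G).range)
      (Subgroup.zpowers_le.2 ⟨_, rfl⟩) (g := b φ) ⟨_, rfl⟩ fun k hk => ?_
    obtain ⟨v, rfl⟩ := hk
    refine ⟨(toAdd v).2, ?_⟩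
    rw [inl_eq_b_zpow_mul_a_zpow, inv_mul_cancel_left]
    exact Subgroup.zpow_mem_zpowers _ _
  · have : (inl : _ →* G).range.Normal := range_inl_eq_ker_rightHom (φ := φ) ▸ inferInstance
    refine Subgroup.le_and_isCyclic_quotient_subgroupOf (H := (inl : _ →* G).range) (K := ⊤)
      le_top (g := t φ) trivial fun k _ => ⟨toAdd k.right, ?_⟩
    rw [range_inl_eq_ker_rightHom, MonoidHom.mem_ker, ← inr_eq_t_zpow]
    simp

variable (hcat : ∀ v, φ (ofAdd 1) (ofAdd v) = ofAdd (catMap v))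
include hcat

lemma twoLetterWord_a_mul_t_t {n : ℕ} (ε : Fin n → Bool) :
    twoLetterWord (a φ * t φ) (t φ) ε =
      inl (ofAdd (∑ i, if ε i then catMap^[i] (1, 0) else 0)) * inr (ofAdd (n : ℤ)) := by
  have factor i : (if ε i then a φ * t φ else t φ) =
      inl (if ε i then ofAdd (1, 0) else 1) * inr (ofAdd 1) := by
    split <;> simp [a, t]
  simp only [twoLetterWord, factor]
  rw [list_prod_ofFn_inl_mul_inr, ofAdd_sum, ← List.prod_ofFn, ← ofAdd_nsmul, nsmul_one]
  congr 3
  refine congrArg List.ofFn (funext fun i => ?_)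
  split
  · rw [map_pow, MulAut.pow_ofAdd_eq_ofAdd_iterate _ hcat]
  · simp

lemma twoLetterWord_a_mul_t_t_injective (n : ℕ) :
    Function.Injective (twoLetterWord (a φ * t φ) (t φ) : (Fin n → Bool) → G) := by
  intro ε δ h
  apply sum_ite_injective_of_sum_range_lt sum_range_fst_iterate_catMap_lt n
  have := congrArg (fun g : G => (toAdd g.left).1) h
  simpa [twoLetterWord_a_mul_t_t hcat, Prod.fst_sum, apply_ite] using this

end IntSqSemidirect

open IntSqSemidirect

/-- Let `α` be the automorphism of `ℤ²` given by the matrix `((2,1),(1,1))`, and let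
`G = ℤ² ⋊_α ℤ` be the corresponding semidirect product. Then `G` is polycyclic, and `G` has
exponential growth: there exist a finite generating set `S` of `G` with `1 ∈ S` and
`S = S⁻¹`, and a real number `c > 1`, such that for every `k ∈ ℕ` the product set `Sᵏ`
has cardinality at least `cᵏ`. -/
theorem semidirect_polycyclic_exponential_growth
    (α : (ℤ × ℤ) ≃+ (ℤ × ℤ))
    (hα : ∀ v : ℤ × ℤ, α v = (2 * v.1 + v.2, v.1 + v.2))
    (φ : Multiplicative ℤ →* MulAut (Multiplicative (ℤ × ℤ)))
    (hφ : ∀ v : ℤ × ℤ, φ (Multiplicative.ofAdd (1 : ℤ)) (Multiplicative.ofAdd v) =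
      Multiplicative.ofAdd (α v)) :
    IsPolycyclic (SemidirectProduct (Multiplicative (ℤ × ℤ)) (Multiplicative ℤ) φ) ∧
    ∃ S : Set (SemidirectProduct (Multiplicative (ℤ × ℤ)) (Multiplicative ℤ) φ),
      S.Finite ∧ (1 : SemidirectProduct (Multiplicative (ℤ × ℤ)) (Multiplicative ℤ) φ) ∈ S ∧
      S⁻¹ = S ∧ Subgroup.closure S = ⊤ ∧
      ∃ c : ℝ, 1 < c ∧ ∀ k : ℕ, c ^ k ≤ ((S ^ k).ncard : ℝ) := by
  have hcat : ∀ v, φ (.ofAdd 1) (.ofAdd v) = .ofAdd (catMap v) := fun v => by rw [hφ, hα]; rfl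
  set X := ({a φ, b φ, t φ, a φ * t φ} : Set (Multiplicative (ℤ × ℤ) ⋊[φ] Multiplicative ℤ))
  have hS : (insert 1 (X ∪ X⁻¹)).Finite := (X.toFinite.union X.toFinite.inv).insert 1
  refine ⟨isPolycyclic φ, insert 1 (X ∪ X⁻¹), hS, Set.mem_insert _ _, ?_, ?_, 2, one_lt_two,
    fun k => ?_⟩
  · rw [Set.inv_insert, inv_one, Set.union_inv, inv_inv, Set.union_comm]
  · rw [Subgroup.closure_insert_one, Subgroup.closure_union, Subgroup.closure_inv, sup_idem,
      eq_top_iff, ← closure_a_b_t_eq_top]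
    exact Subgroup.closure_mono (by simp [X, Set.subset_def])
  · exact_mod_cast two_pow_le_ncard_pow hS (by simp [X]) (by simp [X])
      (twoLetterWord_a_mul_t_t_injective hcat k)
end
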